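/- If ℓ, ℓ' ∈ ℂ are not odd integers and there exists a linear bijection Φ: V(ℓ') → V(ℓ) with Φ∘A' = A∘Φ and Φ∘B' = B∘Φ, then ℓ' - ℓ is an even integer. -/

import Mathlib

/-- The shift operator `A` on the space `V(ℓ) = ℤ →₀ K`, `A eₖ = eₖ₊₁`. -/
noncomputable def aslA (K : Type*) [Field K] : Module.End K (ℤ →₀ K) :=
  Finsupp.lsum K fun k => (LinearMap.id : K →ₗ[K] K).smulRight (Finsupp.single (k + 1) (1 : K))

/-- The operator `B` on `V(ℓ)`, `B eₖ = ((1-ℓ)/2 - ⌊k/2⌋) eₖ₋₁`. -/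
noncomputable def aslB (K : Type*) [Field K] (ℓ : K) : Module.End K (ℤ →₀ K) :=
  Finsupp.lsum K fun k => (LinearMap.id : K →ₗ[K] K).smulRight
    ((((1 : K) - ℓ) / 2 - ((Int.fdiv k 2 : ℤ) : K)) • Finsupp.single (k - 1) (1 : K))

/-!
`B A` acts diagonally on `V(ℓ)`, with eigenvalue `(1-ℓ)/2 - ⌊(j+1)/2⌋` on `e_j`. An intertwiner
`Φ : V(ℓ') → V(ℓ)` maps the eigenvector `e₀` of `B' A'` (eigenvalue `(1-ℓ')/2`) to a nonzero
eigenvector of `B A` with the same eigenvalue, so `(1-ℓ')/2 = (1-ℓ)/2 - m` for some integer `m`.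
-/

section

variable {K : Type*} [Field K]

@[simp]
lemma aslA_single (k : ℤ) (c : K) : aslA K (Finsupp.single k c) = Finsupp.single (k + 1) c := by
  simp [aslA]

@[simp]
lemma aslB_single (ℓ : K) (k : ℤ) (c : K) :
    aslB K ℓ (Finsupp.single k c)
      = Finsupp.single (k - 1) (((1 - ℓ) / 2 - ((Int.fdiv k 2 : ℤ) : K)) * c) := by
  rw [aslB, Finsupp.lsum_single, LinearMap.smulRight_apply, LinearMap.id_apply, smul_smul,
    Finsupp.smul_single, smul_eq_mul, mul_one, mul_comm c]

lemma aslB_aslA_apply (ℓ : K) (v : ℤ →₀ K) (j : ℤ) :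
    aslB K ℓ (aslA K v) j = ((1 - ℓ) / 2 - ((Int.fdiv (j + 1) 2 : ℤ) : K)) * v j := by
  induction v using Finsupp.induction_linear with
  | zero => simp
  | add f g hf hg => simp [hf, hg, mul_add]
  | single k c =>
    by_cases h : k = j
    · subst h; simp
    · simp [h]

lemma aslB_aslA_single_zero (ℓ : K) (c : K) :
    aslB K ℓ (aslA K (Finsupp.single 0 c)) = ((1 - ℓ) / 2) • Finsupp.single 0 c := by
  simp

lemma exists_int_of_aslB_aslA_eigenvector (ℓ μ : K) {v : ℤ →₀ K} (hv : v ≠ 0)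
    (h : aslB K ℓ (aslA K v) = μ • v) : ∃ m : ℤ, μ = (1 - ℓ) / 2 - m := by
  obtain ⟨j, hj⟩ := Finsupp.ne_iff.mp hv
  refine ⟨Int.fdiv (j + 1) 2, mul_right_cancel₀ hj ?_⟩
  simpa [aslB_aslA_apply] using (DFunLike.congr_fun h j).symm

end

theorem stmt_15_general (ℓ ℓ' : ℂ)
    (Φ : (ℤ →₀ ℂ) →ₗ[ℂ] (ℤ →₀ ℂ)) (hbij : Function.Bijective Φ)
    (hA : Φ ∘ₗ aslA ℂ = aslA ℂ ∘ₗ Φ)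
    (hB : Φ ∘ₗ aslB ℂ ℓ' = aslB ℂ ℓ ∘ₗ Φ) :
    ∃ m : ℤ, ℓ' - ℓ = 2 * (m : ℂ) := by
  set v := Φ (Finsupp.single 0 1)
  have hv : v ≠ 0 :=
    (map_ne_zero_iff Φ hbij.injective).mpr (Finsupp.single_ne_zero.mpr one_ne_zero)
  have hvec : aslB ℂ ℓ (aslA ℂ v) = ((1 - ℓ') / 2) • v := by
    calc aslB ℂ ℓ (aslA ℂ v) = Φ (aslB ℂ ℓ' (aslA ℂ (Finsupp.single 0 1))) := by
          rw [← LinearMap.comp_apply (aslA ℂ) Φ, ← hA, LinearMap.comp_apply,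
            ← LinearMap.comp_apply (aslB ℂ ℓ) Φ, ← hB, LinearMap.comp_apply]
      _ = ((1 - ℓ') / 2) • v := by rw [aslB_aslA_single_zero, map_smul]
  obtain ⟨m, hm⟩ := exists_int_of_aslB_aslA_eigenvector ℓ _ hv hvec
  exact ⟨m, by linear_combination -2 * hm⟩

theorem stmt_15 (ℓ ℓ' : ℂ)
    (hℓ : ¬ ∃ n : ℤ, ℓ = 2 * (n : ℂ) + 1) (hℓ' : ¬ ∃ n : ℤ, ℓ' = 2 * (n : ℂ) + 1)
    (Φ : (ℤ →₀ ℂ) →ₗ[ℂ] (ℤ →₀ ℂ)) (hbij : Function.Bijective Φ)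
    (hA : Φ ∘ₗ aslA ℂ = aslA ℂ ∘ₗ Φ)
    (hB : Φ ∘ₗ aslB ℂ ℓ' = aslB ℂ ℓ ∘ₗ Φ) :
    ∃ m : ℤ, ℓ' - ℓ = 2 * (m : ℂ) :=
  stmt_15_general ℓ ℓ' Φ hbij hA hB
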